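/- Let 0 < c ≤ 1/2 and let x_1, x_2, ... be reals with |x_i| ≤ 1 for all i. Define x̄_0 = 0, x̄_i = (x_1+...+x_i)/i, and K_n = ∏_{i=1}^n (1 + c·x̄_{i−1}·x_i). If limsup_n √n·|x̄_n|/√(log n) > 1, then limsup_n K_n = ∞. -/

import Mathlib

/-!
Write `u_n = c x̄_{n-1} x_n`, so that `log K_n = ∑ log (1 + u_i)` with `|u_i| ≤ 1/2`, and
`log (1 + u) ≥ u - u²` there. An exact identity for the update `x̄_{n+1} = (n x̄_n + x_{n+1})/(n+1)`
shows that, because `c ≤ 1/2`, each `u - u²` dominates the increment of the potential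
`(c/2) ((n+1) x̄_n² + 1/n - log n)`, whence `log K_n ≥ (c/2) ((n+1) x̄_n² - log n) - O(1)`.
Whenever `n x̄_n² > r² log n` with `r > 1`, this is at least `(c/2) (r² - 1) log n - O(1)`, and that
happens for infinitely many `n`.
-/

open Filter Real

theorem sub_sq_le_log_one_add {u : ℝ} (hu : |u| ≤ 1 / 2) : u - u ^ 2 ≤ log (1 + u) := by
  obtain ⟨hu₁, hu₂⟩ := abs_le.mp hu
  have h1u : 0 < 1 + u := by linarith
  rcases le_or_gt 0 u with hu0 | hu0
  · have hinv : (1 + u)⁻¹ ≤ 1 - u + u ^ 2 := by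
      rw [inv_le_iff_one_le_mul₀ h1u]
      nlinarith
    linarith [one_sub_inv_le_log_of_pos h1u]
  · rw [le_log_iff_exp_le h1u, show u - u ^ 2 = -(u ^ 2 - u) by ring, exp_neg,
      inv_le_iff_one_le_mul₀ (exp_pos _)]
    have hexp := quadratic_le_exp_of_nonneg (x := u ^ 2 - u) (by nlinarith)
    nlinarith [mul_le_mul_of_nonneg_left hexp h1u.le]

theorem inv_add_one_le_log_add_one_sub_log {N : ℝ} (hN : 0 < N) :
    (N + 1)⁻¹ ≤ log (N + 1) - log N := by
  have h := one_sub_inv_le_log_of_pos (x := (N + 1) / N) (by positivity)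
  rw [log_div (by positivity) hN.ne', inv_div] at h
  calc (N + 1)⁻¹ = 1 - N / (N + 1) := by field_simp; ring
    _ ≤ _ := h

/-- `A` is the running mean after `N` rounds and `B` the next move, so `(N A + B) / (N + 1)` is the
next running mean. -/
theorem potential_step_le {c A B N : ℝ} (hc0 : 0 ≤ c) (hc1 : c ≤ 1 / 2) (hB : |B| ≤ 1)
    (hN : 0 < N) :
    c / 2 * ((N + 2) * ((N * A + B) / (N + 1)) ^ 2 - (N + 1) * A ^ 2 - 1 / N)
      ≤ c * A * B - (c * A * B) ^ 2 := by
  have hB2 : 0 ≤ 1 - B ^ 2 := sub_nonneg.mpr ((sq_le_one_iff_abs_le_one B).mpr hB)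
  have hcB : 0 ≤ 1 - 2 * c * B ^ 2 := by nlinarith
  have slack : c * A * B - (c * A * B) ^ 2
      - c / 2 * ((N + 2) * ((N * A + B) / (N + 1)) ^ 2 - (N + 1) * A ^ 2 - 1 / N)
      = c / (2 * N * (N + 1) ^ 2) * ((N * A + B) ^ 2 + (N + 1) ^ 2 * (1 - B ^ 2)
          + N * (N + 1) ^ 2 * A ^ 2 * (1 - 2 * c * B ^ 2)) := by
    field_simp
    ring
  rw [← sub_nonneg, slack]
  positivity

theorem sq_mul_lt_of_lt_sqrt_mul_abs_div_sqrt {r a m L : ℝ} (hr : 0 ≤ r) (hm : 0 ≤ m)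
    (hL : 0 < L) (h : r < √m * |a| / √L) : r ^ 2 * L < m * a ^ 2 := by
  rwa [← sqrt_sq_eq_abs, ← sqrt_mul hm, ← sqrt_div' _ hL.le, lt_sqrt hr, lt_div_iff₀ hL] at h

theorem exists_real_lt_frequently_lt_of_lt_limsup {ι : Type*} {l : Filter ι} {f : ι → ℝ}
    {a : EReal} (h : a < limsup (fun i => (f i : EReal)) l) :
    ∃ r : ℝ, a < r ∧ ∃ᶠ i in l, r < f i := by
  obtain ⟨r, har, hr⟩ := EReal.lt_iff_exists_real_btwn.mp h
  exact ⟨r, har, (frequently_lt_of_lt_limsup (by isBoundedDefault) hr).mono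
    fun _ => EReal.coe_lt_coe_iff.mp⟩

theorem limsup_coe_eq_top_of_frequently_le {ι : Type*} {l : Filter ι} {u : ι → ℝ}
    (h : ∀ M : ℝ, ∃ᶠ i in l, M ≤ u i) : limsup (fun i => (u i : EReal)) l = ⊤ := by
  refine EReal.eq_top_iff_forall_lt _ |>.mpr fun M => ?_
  refine (EReal.coe_lt_coe_iff.mpr (lt_add_one M)).trans_le (le_limsup_of_frequently_le' ?_)
  exact (h (M + 1)).mono fun _ => EReal.coe_le_coe_iff.mpr

noncomputable def runningMean (x : ℕ → ℝ) (n : ℕ) : ℝ := (∑ j ∈ Finset.Icc 1 n, x j) / n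

noncomputable def capital (c : ℝ) (x : ℕ → ℝ) (n : ℕ) : ℝ :=
  ∏ i ∈ Finset.Icc 1 n, (1 + c * runningMean x (i - 1) * x i)

section

variable {c : ℝ} {x : ℕ → ℝ}

theorem natCast_mul_runningMean (x : ℕ → ℝ) (n : ℕ) :
    n * runningMean x n = ∑ j ∈ Finset.Icc 1 n, x j := by
  rcases eq_or_ne n 0 with rfl | hn
  · simp
  · exact mul_div_cancel₀ _ (Nat.cast_ne_zero.mpr hn)

theorem runningMean_succ (x : ℕ → ℝ) (n : ℕ) :
    runningMean x (n + 1) = (n * runningMean x n + x (n + 1)) / (n + 1) := by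
  rw [natCast_mul_runningMean, ← Finset.sum_Icc_succ_top (by omega), runningMean]
  push_cast
  rfl

theorem abs_runningMean_le_one (hx : ∀ i, |x i| ≤ 1) (n : ℕ) : |runningMean x n| ≤ 1 := by
  rw [runningMean, abs_div, Nat.abs_cast]
  refine div_le_one_of_le₀ ?_ n.cast_nonneg
  calc |∑ j ∈ Finset.Icc 1 n, x j| ≤ ∑ j ∈ Finset.Icc 1 n, |x j| :=
        Finset.abs_sum_le_sum_abs _ _
    _ ≤ ∑ _j ∈ Finset.Icc 1 n, 1 := Finset.sum_le_sum fun i _ => hx i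
    _ = n := by simp

theorem capital_zero (c : ℝ) (x : ℕ → ℝ) : capital c x 0 = 1 := by
  simp [capital]

theorem capital_succ (c : ℝ) (x : ℕ → ℝ) (n : ℕ) :
    capital c x (n + 1) = capital c x n * (1 + c * runningMean x n * x (n + 1)) := by
  rw [capital, capital, Finset.prod_Icc_succ_top (by omega), Nat.add_sub_cancel]

theorem abs_mul_runningMean_mul_le (hc : |c| ≤ 1 / 2) (hx : ∀ i, |x i| ≤ 1) (n : ℕ) :
    |c * runningMean x n * x (n + 1)| ≤ 1 / 2 := by
  rw [abs_mul, abs_mul]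
  calc |c| * |runningMean x n| * |x (n + 1)| ≤ |c| * 1 * 1 := by
        gcongr
        exacts [abs_runningMean_le_one hx n, hx _]
    _ ≤ 1 / 2 := by simpa using hc

theorem capital_pos (hc : |c| ≤ 1 / 2) (hx : ∀ i, |x i| ≤ 1) (n : ℕ) :
    0 < capital c x n := by
  induction n with
  | zero => simp [capital_zero]
  | succ n ih =>
    rw [capital_succ]
    have := (abs_le.mp (abs_mul_runningMean_mul_le hc hx n)).1
    exact mul_pos ih (by linarith)

theorem le_log_capital (hc0 : 0 ≤ c) (hc1 : c ≤ 1 / 2) (hx : ∀ i, |x i| ≤ 1) {n : ℕ}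
    (hn : 1 ≤ n) :
    c / 2 * ((n + 1) * runningMean x n ^ 2 + 1 / n - log n - 3) ≤ log (capital c x n) := by
  have hc : |c| ≤ 1 / 2 := abs_le.mpr ⟨by linarith, hc1⟩
  induction n, hn using Nat.le_induction with
  | base =>
    have hA : runningMean x 1 ^ 2 ≤ 1 :=
      (sq_le_one_iff_abs_le_one _).mpr (abs_runningMean_le_one hx 1)
    have hK1 : capital c x 1 = 1 := by simp [capital, runningMean]
    rw [hK1]
    norm_num
    nlinarith
  | succ n hn ih =>
    have hN : (0 : ℝ) < n := by exact_mod_cast hn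
    have hu := abs_mul_runningMean_mul_le hc hx n
    have hlog_succ : log (capital c x (n + 1))
        = log (capital c x n) + log (1 + c * runningMean x n * x (n + 1)) := by
      rw [capital_succ, log_mul (capital_pos hc hx n).ne' (by linarith [(abs_le.mp hu).1])]
    have hstep := potential_step_le (A := runningMean x n) hc0 hc1 (hx (n + 1)) hN
    rw [← runningMean_succ] at hstep
    have hharm := mul_le_mul_of_nonneg_left (inv_add_one_le_log_add_one_sub_log hN)
      (by positivity : 0 ≤ c / 2)
    rw [hlog_succ]
    push_cast
    linear_combination ih + hstep + hharm + sub_sq_le_log_one_add hu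

theorem le_log_capital_of_lt {r : ℝ} (hc0 : 0 ≤ c) (hc1 : c ≤ 1 / 2) (hx : ∀ i, |x i| ≤ 1)
    (hr : 0 ≤ r) {n : ℕ} (hn : 2 ≤ n) (h : r < √n * |runningMean x n| / √(log n)) :
    c / 2 * ((r ^ 2 - 1) * log n - 3) ≤ log (capital c x n) := by
  have hlog : 0 < log n := log_pos (by exact_mod_cast hn)
  have hsq := sq_mul_lt_of_lt_sqrt_mul_abs_div_sqrt hr n.cast_nonneg hlog h
  refine le_trans ?_ (le_log_capital hc0 hc1 hx (by omega : 1 ≤ n))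
  gcongr
  have : (0 : ℝ) ≤ runningMean x n ^ 2 + 1 / n := by positivity
  linarith

end

theorem weakly_forcing_slln (c : ℝ) (hc0 : 0 < c) (hc1 : c ≤ 1 / 2)
    (x : ℕ → ℝ) (hx : ∀ i, |x i| ≤ 1)
    (xbar : ℕ → ℝ) (hxbar : ∀ i, xbar i = (∑ j ∈ Finset.Icc 1 i, x j) / i)
    (K : ℕ → ℝ) (hK : ∀ n, K n = ∏ i ∈ Finset.Icc 1 n, (1 + c * xbar (i - 1) * x i))
    (hls : Filter.atTop.limsup
      (fun n : ℕ => ((Real.sqrt n * |xbar n| / Real.sqrt (Real.log n) : ℝ) : EReal)) > 1) :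
    Filter.atTop.limsup (fun n : ℕ => ((K n : ℝ) : EReal)) = ⊤ := by
  obtain rfl : xbar = runningMean x := funext hxbar
  obtain rfl : K = capital c x := funext hK
  obtain ⟨r, hr1, hfreq⟩ := exists_real_lt_frequently_lt_of_lt_limsup hls
  have hr1 : (1 : ℝ) < r := mod_cast hr1
  have hgrowth : Tendsto (fun n : ℕ => c / 2 * ((r ^ 2 - 1) * log n - 3)) atTop atTop := by
    refine Tendsto.const_mul_atTop (by positivity) (tendsto_atTop_add_const_right _ _ ?_)
    exact (tendsto_log_atTop.comp tendsto_natCast_atTop_atTop).const_mul_atTop (by nlinarith)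
  refine limsup_coe_eq_top_of_frequently_le fun M => ?_
  refine (hfreq.and_eventually <| (hgrowth.eventually_ge_atTop M).and
    (eventually_ge_atTop 2)).mono fun n ⟨hlt, hM, hn⟩ => ?_
  have hK_pos := capital_pos (abs_le.mpr ⟨by linarith, hc1⟩) hx n
  calc M ≤ log (capital c x n) :=
        hM.trans (le_log_capital_of_lt hc0.le hc1 hx (by linarith) hn hlt)
    _ ≤ capital c x n - 1 := log_le_sub_one_of_pos hK_pos
    _ ≤ capital c x n := by linarith
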